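/- Let I = (𝔼, D, c, f) be a CMP instance whose objective f is of type bottleneck, and let E = {e_1,…,e_k} ⊆ 𝔼. Then Σ_{l=1}^k u'(I,e_l) ≤ u'(I,E). -/

import Mathlib

open scoped ENNReal BigOperators

/-- Objective type of a combinatorial minimization problem:
sum, product, or bottleneck. -/
inductive ObjType where
  | sum : ObjType
  | prod : ObjType
  | bottleneck : ObjType
deriving DecidableEq

/-- The cost `f_c(S)` of a feasible solution `S` under cost function `c`:
the sum, the product, or the maximum (for nonempty `S`) of the element costs. -/
noncomputable def objCost {ι : Type*} (t : ObjType) (c : ι → ℝ) (S : Finset ι) : ℝ :=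
  match t with
  | ObjType.sum => ∑ e ∈ S, c e
  | ObjType.prod => ∏ e ∈ S, c e
  | ObjType.bottleneck => if h : S.Nonempty then S.sup' h c else 0

/-- The optimal objective value `f(I)` of the instance with feasible set `D`. -/
noncomputable def optVal {ι : Type*} (t : ObjType) (c : ι → ℝ) (D : Finset (Finset ι)) : ℝ :=
  if h : D.Nonempty then D.inf' h (objCost t c) else 0

/-- `S` is an optimal solution of the instance `(𝔼, D, c, f)`. -/
def isOpt {ι : Type*} (t : ObjType) (c : ι → ℝ) (D : Finset (Finset ι)) (S : Finset ι) : Prop :=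
  S ∈ D ∧ objCost t c S = optVal t c D

/-- `0 ≤ a < maxdec(e)`, where `maxdec(e) = ∞` for sum/bottleneck objectives and
`maxdec(e) = c(e)` for the product objective. -/
def decOK {ι : Type*} (t : ObjType) (c : ι → ℝ) (e : ι) (a : ℝ) : Prop :=
  0 ≤ a ∧ (t = ObjType.prod → a < c e)

/-- Extended single upper tolerance
`u'(I,e) = sup {α ≥ 0 : every optimal solution of I is optimal for I_{α,e}}` valued in `[0,∞]`. -/
noncomputable def uTol {ι : Type*} [DecidableEq ι] (t : ObjType) (c : ι → ℝ)
    (D : Finset (Finset ι)) (e : ι) : ℝ≥0∞ :=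
  sSup (ENNReal.ofReal '' {a : ℝ | 0 ≤ a ∧
    ∀ S : Finset ι, isOpt t c D S →
      isOpt t (fun x => if x = e then c x + a else c x) D S})

/-- Extended regular set upper tolerance `u'(I,E)`, valued in `[0,∞]`. -/
noncomputable def uTolSet {ι : Type*} [DecidableEq ι] (t : ObjType) (c : ι → ℝ)
    (D : Finset (Finset ι)) (E : Finset ι) : ℝ≥0∞ :=
  sSup (ENNReal.ofReal '' {a : ℝ |
    ∀ S : Finset ι, isOpt t c D S →
      ∃ α : ι → ℝ, (∀ x, 0 ≤ α x) ∧ (∀ x ∉ E, α x = 0) ∧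
        a = ∑ x ∈ E, α x ∧ isOpt t (fun x => c x + α x) D S})

/-- Extended reverse set upper tolerance `u_b'(I,E)`, valued in `[0,∞]` (`inf ∅ = ∞`). -/
noncomputable def uTolSetRev {ι : Type*} [DecidableEq ι] (t : ObjType) (c : ι → ℝ)
    (D : Finset (Finset ι)) (E : Finset ι) : ℝ≥0∞ :=
  sInf (ENNReal.ofReal '' {a : ℝ |
    ∃ S : Finset ι, isOpt t c D S ∧
      ∃ α : ι → ℝ, (∀ x, 0 ≤ α x) ∧ (∀ x ∉ E, α x = 0) ∧
        a = ∑ x ∈ E, α x ∧ ¬ isOpt t (fun x => c x + α x) D S})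

/-- New single lower tolerance
`l'(I,e) = sup {α : 0 ≤ α < maxdec(e), f(I_{−α,e}) = f(I)}`, valued in `[0,∞]`. -/
noncomputable def lTol {ι : Type*} [DecidableEq ι] (t : ObjType) (c : ι → ℝ)
    (D : Finset (Finset ι)) (e : ι) : ℝ≥0∞ :=
  sSup (ENNReal.ofReal '' {a : ℝ | decOK t c e a ∧
    optVal t (fun x => if x = e then c x - a else c x) D = optVal t c D})

/-- New regular set lower tolerance `l'(I,E)`, valued in `[0,∞]`. -/
noncomputable def lTolSet {ι : Type*} [DecidableEq ι] (t : ObjType) (c : ι → ℝ)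
    (D : Finset (Finset ι)) (E : Finset ι) : ℝ≥0∞ :=
  sSup (ENNReal.ofReal '' {a : ℝ |
    ∃ α : ι → ℝ, (∀ x ∈ E, decOK t c x (α x)) ∧ (∀ x ∉ E, α x = 0) ∧
      a = ∑ x ∈ E, α x ∧ optVal t (fun x => c x - α x) D = optVal t c D})

/-- New reverse set lower tolerance `l_b'(I,E)`, valued in `[0,∞]` (`inf ∅ = ∞`). -/
noncomputable def lTolSetRev {ι : Type*} [DecidableEq ι] (t : ObjType) (c : ι → ℝ)
    (D : Finset (Finset ι)) (E : Finset ι) : ℝ≥0∞ :=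
  sInf (ENNReal.ofReal '' {a : ℝ |
    ∃ α : ι → ℝ, (∀ x ∈ E, decOK t c x (α x)) ∧ (∀ x ∉ E, α x = 0) ∧
      a = ∑ x ∈ E, α x ∧ optVal t (fun x => c x - α x) D < optVal t c D})

/-! Raising the costs on `E` by `α_e` simultaneously yields the pointwise maximum of the single
raises. Under the bottleneck objective the cost of an optimal `S` after the simultaneous raise is
attained at one element `x ∈ S`, so it equals the cost of `S` after the single raise at `x`; as that
raise keeps `S` optimal and lies below the simultaneous one, no `T` becomes cheaper than `S`. Hence
admissible single raises combine into an admissible set raise of total `Σ α_e`, and taking suprema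
termwise gives the inequality. -/

theorem ENNReal.finsetSum_sSup_le_sSup_sum {α : Type*} [DecidableEq α] {s : Finset α}
    {A : α → Set ℝ≥0∞} (hA : ∀ i ∈ s, (A i).Nonempty) :
    ∑ i ∈ s, sSup (A i) ≤ sSup ((fun b => ∑ i ∈ s, b i) '' (s : Set α).pi A) := by
  induction s using Finset.cons_induction with
  | empty => simp
  | cons a s ha ih =>
    rw [Finset.forall_mem_cons] at hA
    have hpi : ((s : Set α).pi A).Nonempty := Set.pi_nonempty_iff.2 fun i => by
      by_cases hi : i ∈ s
      exacts [(hA.2 i hi).imp fun _ h _ => h, ⟨0, fun h => absurd h hi⟩]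
    grw [Finset.sum_cons, ih hA.2, sSup_eq_iSup, sSup_eq_iSup]
    refine ENNReal.biSup_add_biSup_le hA.1 (hpi.image _) ?_
    rintro x hx _ ⟨b, hb, rfl⟩
    refine le_sSup ⟨Function.update b a x, fun i hi => ?_, ?_⟩
    · rcases Finset.mem_cons.1 hi with rfl | hi
      · simpa using hx
      · simpa [Function.update_of_ne (ne_of_mem_of_not_mem hi ha)] using hb i hi
    · simp only [Finset.sum_cons, Function.update_self, Finset.sum_update_of_notMem ha]

theorem isOpt_iff_forall_objCost_le {ι : Type*} {t : ObjType} {c : ι → ℝ}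
    {D : Finset (Finset ι)} {S : Finset ι} :
    isOpt t c D S ↔ S ∈ D ∧ ∀ T ∈ D, objCost t c S ≤ objCost t c T := by
  refine and_congr_right fun hS => ?_
  rw [optVal, dif_pos ⟨S, hS⟩]
  exact ⟨fun h T hT => h ▸ Finset.inf'_le _ hT,
    fun h => le_antisymm (Finset.le_inf' _ _ h) (Finset.inf'_le _ hS)⟩

section Bottleneck

variable {ι : Type*}

theorem objCost_bottleneck_mono {c c' : ι → ℝ} (h : c ≤ c') (S : Finset ι) :
    objCost ObjType.bottleneck c S ≤ objCost ObjType.bottleneck c' S := by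
  unfold objCost
  split_ifs
  exacts [Finset.sup'_mono_fun fun x _ => h x, le_rfl]

theorem le_objCost_bottleneck {c : ι → ℝ} {S : Finset ι} {x : ι} (hx : x ∈ S) :
    c x ≤ objCost ObjType.bottleneck c S := by
  rw [objCost, dif_pos ⟨x, hx⟩]
  exact Finset.le_sup' c hx

theorem exists_mem_objCost_bottleneck_eq (c : ι → ℝ) {S : Finset ι} (hS : S.Nonempty) :
    ∃ x ∈ S, objCost ObjType.bottleneck c S = c x := by
  rw [objCost, dif_pos hS]
  exact Finset.exists_mem_eq_sup' hS c

variable [DecidableEq ι]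

theorem isOpt_bottleneck_add {c α : ι → ℝ} {D : Finset (Finset ι)} {S : Finset ι}
    (hα : ∀ x, 0 ≤ α x) (hS : isOpt ObjType.bottleneck c D S)
    (hsingle : ∀ x ∈ S,
      isOpt ObjType.bottleneck (fun y => if y = x then c y + α x else c y) D S) :
    isOpt ObjType.bottleneck (fun x => c x + α x) D S := by
  have hc : c ≤ fun x => c x + α x := fun x => le_add_of_nonneg_right (hα x)
  rw [isOpt_iff_forall_objCost_le] at hS ⊢
  refine ⟨hS.1, fun T hT => ?_⟩
  rcases S.eq_empty_or_nonempty with rfl | hne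
  · calc objCost ObjType.bottleneck (fun x => c x + α x) ∅
        = objCost ObjType.bottleneck c ∅ := rfl
      _ ≤ objCost ObjType.bottleneck c T := hS.2 T hT
      _ ≤ _ := objCost_bottleneck_mono hc T
  obtain ⟨x, hx, hmax⟩ := exists_mem_objCost_bottleneck_eq (fun x => c x + α x) hne
  have hraise : (fun y => if y = x then c y + α x else c y) ≤ fun y => c y + α y := by
    intro y
    dsimp only
    split_ifs with hy
    exacts [hy ▸ le_rfl, hc y]
  calc objCost ObjType.bottleneck (fun x => c x + α x) S
      = (fun y => if y = x then c y + α x else c y) x := by simp [hmax]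
    _ ≤ objCost ObjType.bottleneck (fun y => if y = x then c y + α x else c y) S :=
      le_objCost_bottleneck (c := fun y => if y = x then c y + α x else c y) hx
    _ ≤ objCost ObjType.bottleneck (fun y => if y = x then c y + α x else c y) T :=
      (isOpt_iff_forall_objCost_le.1 (hsingle x hx)).2 T hT
    _ ≤ _ := objCost_bottleneck_mono hraise T

theorem exists_raise_of_forall_single_raise_bottleneck {c r : ι → ℝ} {D : Finset (Finset ι)}
    {E S : Finset ι} (hr : ∀ e ∈ E, 0 ≤ r e ∧ ∀ S, isOpt ObjType.bottleneck c D S →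
      isOpt ObjType.bottleneck (fun x => if x = e then c x + r e else c x) D S)
    (hS : isOpt ObjType.bottleneck c D S) :
    ∃ α : ι → ℝ, (∀ x, 0 ≤ α x) ∧ (∀ x ∉ E, α x = 0) ∧
      ∑ e ∈ E, r e = ∑ x ∈ E, α x ∧ isOpt ObjType.bottleneck (fun x => c x + α x) D S := by
  have hα : ∀ x, 0 ≤ if x ∈ E then r x else 0 := fun x => by
    split_ifs with hx
    exacts [(hr x hx).1, le_rfl]
  refine ⟨fun x => if x ∈ E then r x else 0, hα, fun x hx => if_neg hx,
    Finset.sum_congr rfl fun x hx => (if_pos hx).symm, isOpt_bottleneck_add hα hS fun x _ => ?_⟩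
  split_ifs with hx
  · exact (hr x hx).2 S hS
  · simpa using hS

end Bottleneck

theorem urg_sum_le_bottleneck_general {ι : Type*} [DecidableEq ι]
    (c : ι → ℝ) (D : Finset (Finset ι))
    (E : Finset ι) :
    (∑ e ∈ E, uTol ObjType.bottleneck c D e) ≤ uTolSet ObjType.bottleneck c D E := by
  unfold uTol
  refine le_trans (ENNReal.finsetSum_sSup_le_sSup_sum fun e _ =>
    ⟨0, 0, ⟨le_rfl, fun S hS => by simpa using hS⟩, ENNReal.ofReal_zero⟩) (sSup_le ?_)
  rintro _ ⟨b, hb, rfl⟩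
  choose! r hr hrb using hb
  have hsum : ∑ e ∈ E, b e = ENNReal.ofReal (∑ e ∈ E, r e) := by
    rw [ENNReal.ofReal_sum_of_nonneg fun e he => (hr e he).1]
    exact Finset.sum_congr rfl fun e he => (hrb e he).symm
  change ∑ e ∈ E, b e ≤ _
  rw [hsum]
  exact le_sSup ⟨_, fun S hS => exists_raise_of_forall_single_raise_bottleneck hr hS, rfl⟩

/-- Theorem (regular set upper tolerance, bottleneck case):
`Σ_{l} u'(I,e_l) ≤ u'(I,E)` for the bottleneck objective. -/
theorem urg_sum_le_bottleneck {ι : Type*} [Fintype ι] [DecidableEq ι]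
    (c : ι → ℝ) (D : Finset (Finset ι))
    (hD : D.Nonempty) (hSne : ∀ S ∈ D, S.Nonempty)
    (E : Finset ι) (hE : E.Nonempty) :
    (∑ e ∈ E, uTol ObjType.bottleneck c D e) ≤ uTolSet ObjType.bottleneck c D E :=
  urg_sum_le_bottleneck_general c D E
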